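/- arXiv:1810.03327 — 4 statements merged into one kernel-verified Lean document; each statement's English description precedes it below -/
import Mathlib

section
/- Let G be a connected finite simple graph with Laplacian matrix L and let X be any {1}-inverse of L (i.e., L·X·L = L). Then the effective resistance between vertices u and v satisfies r_uv = X_uu + X_vv − X_uv − X_vu. -/
open Matrix

/-- Effective resistance defined from a (pseudo)inverse matrix. -/
def effRes {V : Type*} (M : Matrix V V ℝ) (u v : V) : ℝ :=
  M u u + M v v - 2 * M u v

/-! The Moore–Penrose inverse of the symmetric Laplacian `L` is symmetric, so with
`e = 𝟙ᵤ - 𝟙ᵥ` the resistance is the quadratic form `e ⬝ L⁺ e`. For any {1}-inverse `X` the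
matrix `I - X L` maps into `ker L`; as `G` is connected, `ker L` consists of the constant
vectors, which are orthogonal to `e`. Hence `e = Lᵀ (Xᵀ e)` and likewise `e = L (X e)`, and
writing `e = Lᵀ w = L w'` gives `e ⬝ Y e = w ⬝ L Y L w' = w ⬝ L w'` for every {1}-inverse `Y`,
in particular for `Y = L⁺` and `Y = X`. -/

namespace Matrix

variable {m n R : Type*} [Fintype m] [Fintype n] [CommRing R]

structure IsMoorePenroseInverse (A : Matrix m n R) (B : Matrix n m R) : Prop where
  mul_mul_self : A * B * A = A
  mul_mul_self' : B * A * B = B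
  transpose_mul : (A * B)ᵀ = A * B
  transpose_mul' : (B * A)ᵀ = B * A

namespace IsMoorePenroseInverse

variable {A : Matrix m n R} {B C : Matrix n m R}

theorem transpose (h : IsMoorePenroseInverse A B) : IsMoorePenroseInverse Aᵀ Bᵀ where
  mul_mul_self := by
    rw [← Matrix.transpose_mul, ← Matrix.transpose_mul, ← Matrix.mul_assoc, h.mul_mul_self]
  mul_mul_self' := by
    rw [← Matrix.transpose_mul, ← Matrix.transpose_mul, ← Matrix.mul_assoc, h.mul_mul_self']
  transpose_mul := by rw [← Matrix.transpose_mul, transpose_transpose, h.transpose_mul']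
  transpose_mul' := by rw [← Matrix.transpose_mul, transpose_transpose, h.transpose_mul]

theorem mul_eq (hB : IsMoorePenroseInverse A B) (hC : IsMoorePenroseInverse A C) :
    A * B = A * C :=
  calc A * B = (A * C) * (A * B) := by rw [← Matrix.mul_assoc, hC.mul_mul_self]
  _ = (A * C)ᵀ * (A * B)ᵀ := by rw [hB.transpose_mul, hC.transpose_mul]
  _ = (A * B * A * C)ᵀ := by simp only [Matrix.transpose_mul, Matrix.mul_assoc]
  _ = A * C := by rw [hB.mul_mul_self, hC.transpose_mul]

theorem eq (hB : IsMoorePenroseInverse A B) (hC : IsMoorePenroseInverse A C) : B = C := by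
  have hAB : A * B = A * C := hB.mul_eq hC
  have hBA : B * A = C * A := by
    simpa only [← Matrix.transpose_mul, transpose_transpose] using
      congrArg Matrix.transpose (hB.transpose.mul_eq hC.transpose)
  calc B = B * A * B := hB.mul_mul_self'.symm
  _ = C * A * C := by rw [Matrix.mul_assoc, hAB, ← Matrix.mul_assoc, hBA]
  _ = C := hC.mul_mul_self'

theorem isSymm {A B : Matrix n n R} (h : IsMoorePenroseInverse A B) (hA : A.IsSymm) :
    B.IsSymm :=
  (hA ▸ h.transpose).eq h

end IsMoorePenroseInverse

variable {A : Matrix m n R} {X : Matrix n m R}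

theorem vecMul_mul_eq_self_of_mul_mul_eq_self [DecidableEq n] (hX : A * X * A = A)
    {e : n → R} (he : ∀ z, A *ᵥ z = 0 → e ⬝ᵥ z = 0) : e ᵥ* (X * A) = e := by
  funext j
  have hker : A *ᵥ (Pi.single j 1 - (X * A) *ᵥ Pi.single j 1) = 0 := by
    rw [mulVec_sub, mulVec_mulVec, ← Matrix.mul_assoc, hX, sub_self]
  have horth := he _ hker
  rwa [dotProduct_sub, dotProduct_mulVec, dotProduct_single_one, dotProduct_single_one,
    sub_eq_zero, eq_comm] at horth

theorem mul_mulVec_eq_self_of_mul_mul_eq_self [DecidableEq m] (hX : A * X * A = A)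
    {f : m → R} (hf : ∀ z, z ᵥ* A = 0 → z ⬝ᵥ f = 0) : (A * X) *ᵥ f = f := by
  have hXt : Aᵀ * Xᵀ * Aᵀ = Aᵀ := by
    rw [← Matrix.transpose_mul, ← Matrix.transpose_mul, ← Matrix.mul_assoc, hX]
  have hrow := vecMul_mul_eq_self_of_mul_mul_eq_self hXt (e := f) fun z hz => by
    rw [dotProduct_comm]; exact hf z (by rwa [← mulVec_transpose])
  rwa [← Matrix.transpose_mul, vecMul_transpose] at hrow

theorem dotProduct_mulVec_eq_of_mul_mul_eq_self [DecidableEq m] [DecidableEq n]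
    {Y : Matrix n m R} (hX : A * X * A = A) (hY : A * Y * A = A) {e : n → R} {f : m → R}
    (he : ∀ z, A *ᵥ z = 0 → e ⬝ᵥ z = 0) (hf : ∀ z, z ᵥ* A = 0 → z ⬝ᵥ f = 0) :
    e ⬝ᵥ (X *ᵥ f) = e ⬝ᵥ (Y *ᵥ f) := by
  have hfactor : ∀ Z, A * Z * A = A → e ⬝ᵥ (Z *ᵥ f) = (e ᵥ* X) ⬝ᵥ (A *ᵥ (X *ᵥ f)) := by
    intro Z hZ
    conv_lhs => rw [← vecMul_mul_eq_self_of_mul_mul_eq_self hX he,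
      ← mul_mulVec_eq_self_of_mul_mul_eq_self hX hf]
    rw [← vecMul_vecMul, ← mulVec_mulVec, ← dotProduct_mulVec, mulVec_mulVec, mulVec_mulVec, hZ]
  rw [hfactor X hX, hfactor Y hY]

theorem single_sub_single_dotProduct_mulVec [DecidableEq n] (M : Matrix n n R) (u v : n) :
    (Pi.single u 1 - Pi.single v 1) ⬝ᵥ (M *ᵥ (Pi.single u 1 - Pi.single v 1)) =
      M u u + M v v - M u v - M v u := by
  simp only [mulVec_sub, sub_dotProduct, dotProduct_sub, single_dotProduct, one_mul,
    mulVec_single_one, col_apply]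
  ring

end Matrix

theorem SimpleGraph.Connected.single_sub_single_dotProduct_eq_zero {V : Type*} [Fintype V]
    [DecidableEq V] {G : SimpleGraph V} [DecidableRel G.Adj] (hG : G.Connected) (u v : V)
    (z : V → ℝ) (hz : G.lapMatrix ℝ *ᵥ z = 0) : (Pi.single u 1 - Pi.single v 1) ⬝ᵥ z = 0 := by
  rw [sub_dotProduct, single_dotProduct, single_dotProduct, one_mul, one_mul, sub_eq_zero]
  exact G.lapMatrix_mulVec_eq_zero_iff_forall_reachable.mp hz u v (hG u v)

/-- For a connected graph `G` with Laplacian `L`, Moore–Penrose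
pseudoinverse `Lp` (defining the effective resistance), and any {1}-inverse `X`
of `L`, we have `r_uv = X_uu + X_vv - X_uv - X_vu`. -/
theorem resistance_via_one_inverse {V : Type*} [Fintype V] [DecidableEq V]
    (G : SimpleGraph V) [DecidableRel G.Adj] (hG : G.Connected)
    (Lp X : Matrix V V ℝ)
    (hp1 : G.lapMatrix ℝ * Lp * G.lapMatrix ℝ = G.lapMatrix ℝ)
    (hp2 : Lp * G.lapMatrix ℝ * Lp = Lp)
    (hp3 : (G.lapMatrix ℝ * Lp)ᵀ = G.lapMatrix ℝ * Lp)
    (hp4 : (Lp * G.lapMatrix ℝ)ᵀ = Lp * G.lapMatrix ℝ)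
    (hX : G.lapMatrix ℝ * X * G.lapMatrix ℝ = G.lapMatrix ℝ) :
    ∀ u v : V, effRes Lp u v = X u u + X v v - X u v - X v u := by
  intro u v
  have hLp_symm : Lp v u = Lp u v :=
    (IsMoorePenroseInverse.isSymm ⟨hp1, hp2, hp3, hp4⟩ (G.isSymm_lapMatrix ℝ)).apply u v
  have he := hG.single_sub_single_dotProduct_eq_zero u v
  have hquad := dotProduct_mulVec_eq_of_mul_mul_eq_self hp1 hX he fun z hz => by
    rw [dotProduct_comm]
    exact he z (by rwa [← vecMul_transpose, G.isSymm_lapMatrix ℝ])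
  rw [single_sub_single_dotProduct_mulVec, single_sub_single_dotProduct_mulVec] at hquad
  rw [effRes, ← hquad, hLp_symm]
  ring
end

section
/- For a square matrix M, the group inverse M^# exists if and only if rank(M) = rank(M²). -/
open Matrix

lemma col_solve {n : ℕ} {K : Type*} [Field K] [DecidableEq K]
    (M : Matrix (Fin n) (Fin n) K) (h : M.rank = (M * M).rank) :
    ∃ Y : Matrix (Fin n) (Fin n) K, M * M * Y = M := by
  have hle : LinearMap.range (M * M).mulVecLin ≤ LinearMap.range M.mulVecLin := by
    rw [Matrix.mulVecLin_mul]
    exact LinearMap.range_comp_le_range _ _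
  have heq : LinearMap.range (M * M).mulVecLin = LinearMap.range M.mulVecLin := by
    apply Submodule.eq_of_le_of_finrank_le hle
    exact le_of_eq h
  have hy : ∀ c : Fin n, ∃ y : Fin n → K,
      (M * M).mulVec y = M.mulVec (Pi.single c 1) := by
    intro c
    have hmem : M.mulVec (Pi.single c 1) ∈ LinearMap.range M.mulVecLin :=
      ⟨Pi.single c 1, rfl⟩
    rw [← heq] at hmem
    obtain ⟨y, hy⟩ := hmem
    exact ⟨y, hy⟩
  choose y hy using hy
  refine ⟨Matrix.of fun r c => y c r, ?_⟩
  ext r c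
  have h1 := congrFun (hy c) r
  simp only [Matrix.mulVec, dotProduct, Pi.single_apply, mul_ite, mul_one, mul_zero,
    Finset.sum_ite_eq', Finset.mem_univ, if_true] at h1
  simpa [Matrix.mul_apply, Matrix.mulVec, dotProduct] using h1

/-- For a square matrix `M` over a field, the group inverse exists
iff `rank M = rank (M * M)`. -/
theorem group_inverse_exists_iff_rank {n : ℕ} {K : Type*} [Field K]
    [DecidableEq K] (M : Matrix (Fin n) (Fin n) K) :
    (∃ X : Matrix (Fin n) (Fin n) K,
        M * X * M = M ∧ X * M * X = X ∧ M * X = X * M) ↔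
      M.rank = (M * M).rank := by
  constructor
  · rintro ⟨X, h1, h2, h3⟩
    refine le_antisymm ?_ (Matrix.rank_mul_le_left M M)
    have hM : M = (M * M) * X := by
      calc M = M * X * M := h1.symm
      _ = M * (X * M) := by rw [mul_assoc]
      _ = M * (M * X) := by rw [h3]
      _ = (M * M) * X := by rw [mul_assoc]
    calc M.rank = ((M * M) * X).rank := by rw [← hM]
    _ ≤ (M * M).rank := Matrix.rank_mul_le_left _ _
  · intro h
    obtain ⟨Y, hY⟩ := col_solve M h
    have hT : Mᵀ.rank = (Mᵀ * Mᵀ).rank := by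
      rw [← Matrix.transpose_mul, Matrix.rank_transpose, Matrix.rank_transpose]
      exact h
    obtain ⟨W, hW⟩ := col_solve Mᵀ hT
    set Z := Wᵀ with hZdef
    have hZ : Z * M * M = M := by
      have h2 := congrArg Matrix.transpose hW
      simp only [Matrix.transpose_mul, Matrix.transpose_transpose] at h2
      rw [mul_assoc]
      exact h2
    -- key identity
    have hk : M * Y = Z * M := by
      calc M * Y = (Z * M * M) * Y := by rw [hZ]
      _ = Z * (M * M * Y) := by rw [mul_assoc Z M M, mul_assoc Z (M * M) Y]
      _ = Z * M := by rw [hY]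
    refine ⟨M * Y * Y, ?_, ?_, ?_⟩
    case _ =>
      -- M * (M*Y*Y) * M = M
      calc M * (M * Y * Y) * M = (M * M * Y) * Y * M := by
            rw [← mul_assoc M (M * Y) Y, ← mul_assoc M M Y]
      _ = M * Y * M := by rw [hY]
      _ = Z * M * M := by rw [hk]
      _ = M := hZ
    case _ =>
      -- (M*Y*Y) * M * (M*Y*Y) = M*Y*Y
      calc M * Y * Y * M * (M * Y * Y)
          = Z * M * Y * M * (M * Y * Y) := by rw [hk]
      _ = Z * (M * Y) * M * (M * Y * Y) := by rw [mul_assoc Z M Y]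
      _ = Z * (Z * M) * M * (M * Y * Y) := by rw [hk]
      _ = Z * (Z * M * M) * (M * Y * Y) := by
            rw [mul_assoc Z (Z * M) M]
      _ = Z * M * (M * Y * Y) := by rw [hZ]
      _ = Z * (M * (M * Y) * Y) := by
            rw [mul_assoc Z M (M * Y * Y), ← mul_assoc M (M * Y) Y]
      _ = Z * (M * M * Y * Y) := by rw [← mul_assoc M M Y]
      _ = Z * (M * Y) := by rw [hY]
      _ = Z * (Z * M) := by rw [hk]
      _ = Z * Z * M := by rw [mul_assoc]
      _ = M * Y * Y := by
          calc Z * Z * M = Z * (Z * M) := by rw [mul_assoc]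
          _ = Z * (M * Y) := by rw [hk]
          _ = Z * M * Y := by rw [mul_assoc]
          _ = M * Y * Y := by rw [← hk]
    case _ =>
      -- M * (M*Y*Y) = (M*Y*Y) * M
      calc M * (M * Y * Y) = M * M * Y * Y := by
            rw [← mul_assoc M (M * Y) Y, ← mul_assoc M M Y]
      _ = M * Y := by rw [hY]
      _ = Z * M := by rw [hk]
      _ = Z * (Z * M * M) := by rw [hZ]
      _ = Z * (Z * M) * M := by rw [mul_assoc Z (Z * M) M]
      _ = Z * (M * Y) * M := by rw [hk]
      _ = Z * M * Y * M := by rw [mul_assoc Z M Y]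
      _ = M * Y * Y * M := by rw [← hk]
end

section
/- Let G be a connected graph with n vertices and edge set E. Then the sum of effective resistances over all edges equals n − 1: Σ_{uv ∈ E} r_uv(G) = n − 1. -/
open Matrix

/-!
Since `L = ∑_{uv ∈ E} (e_u - e_v)(e_u - e_v)ᵀ`, summing `r_uv = (e_u - e_v)ᵀ L⁺ (e_u - e_v)` over
the edges gives `tr (L L⁺)` as soon as `L⁺` is symmetric, which it is because the Penrose
equations determine `L⁺` uniquely and are invariant under transposition. By the same equations
`L L⁺` is an idempotent of the same rank as `L`, so its trace is `rank L = n - 1` for a connected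
graph.
-/

namespace Matrix

variable {m n R : Type*} [Fintype m] [Fintype n]

structure IsPseudoinverse [CommRing R] (A : Matrix m n R) (X : Matrix n m R) : Prop where
  mul_mul_self : A * X * A = A
  mul_mul_self' : X * A * X = X
  isSymm_mul : (A * X).IsSymm
  isSymm_mul' : (X * A).IsSymm

namespace IsPseudoinverse

variable [CommRing R] {A : Matrix m n R} {X Y : Matrix n m R}

theorem transpose (h : A.IsPseudoinverse X) : Aᵀ.IsPseudoinverse Xᵀ where
  mul_mul_self := by rw [← transpose_mul, ← transpose_mul, ← Matrix.mul_assoc, h.mul_mul_self]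
  mul_mul_self' := by rw [← transpose_mul, ← transpose_mul, ← Matrix.mul_assoc, h.mul_mul_self']
  isSymm_mul := transpose_mul X A ▸ h.isSymm_mul'.transpose
  isSymm_mul' := transpose_mul A X ▸ h.isSymm_mul.transpose

theorem mul_left_eq (hX : A.IsPseudoinverse X) (hY : A.IsPseudoinverse Y) : A * X = A * Y :=
  calc A * X = (A * X)ᵀ := hX.isSymm_mul.symm
    _ = (A * Y * A * X)ᵀ := by rw [hY.mul_mul_self]
    _ = (A * X)ᵀ * (A * Y)ᵀ := by rw [← transpose_mul, ← Matrix.mul_assoc]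
    _ = A * X * (A * Y) := by rw [hX.isSymm_mul.eq, hY.isSymm_mul.eq]
    _ = A * Y := by rw [← Matrix.mul_assoc, hX.mul_mul_self]

theorem mul_right_eq (hX : A.IsPseudoinverse X) (hY : A.IsPseudoinverse Y) : X * A = Y * A := by
  simpa only [← transpose_mul, transpose_inj] using hX.transpose.mul_left_eq hY.transpose

theorem unique (hX : A.IsPseudoinverse X) (hY : A.IsPseudoinverse Y) : X = Y :=
  calc X = X * A * X := hX.mul_mul_self'.symm
    _ = Y * A * Y := by
      rw [Matrix.mul_assoc, hX.mul_left_eq hY, ← Matrix.mul_assoc, hX.mul_right_eq hY]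
    _ = Y := hY.mul_mul_self'

theorem isSymm {A X : Matrix n n R} (hX : A.IsPseudoinverse X) (hA : A.IsSymm) : X.IsSymm :=
  (hA.eq ▸ hX.transpose).unique hX

theorem isIdempotentElem_mul {A X : Matrix n n R} (hX : A.IsPseudoinverse X) :
    IsIdempotentElem (A * X) := by
  rw [IsIdempotentElem, ← Matrix.mul_assoc, hX.mul_mul_self]

end IsPseudoinverse

variable {K : Type*} [Field K]

theorem rank_mul_eq_left_of_mul_mul_eq {A : Matrix m n K} {X : Matrix n m K} (h : A * X * A = A) :
    (A * X).rank = A.rank := by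
  refine le_antisymm (rank_mul_le_left A X) ?_
  calc A.rank = (A * X * A).rank := by rw [h]
    _ ≤ (A * X).rank := rank_mul_le_left _ _

theorem trace_eq_rank_of_isIdempotentElem [CharZero K] [DecidableEq n] {P : Matrix n n K}
    (hP : IsIdempotentElem P) : P.trace = P.rank := by
  have hP' : IsIdempotentElem (toLin' P) := by
    rw [IsIdempotentElem, Module.End.mul_eq_comp, ← Matrix.toLin'_mul, hP.eq]
  rw [← trace_toLin'_eq, (LinearMap.IsIdempotentElem.isProj_range _ hP').trace, rank,
    toLin'_apply']

end Matrix

theorem effRes_comm {V : Type*} {M : Matrix V V ℝ} (hM : M.IsSymm) (u v : V) :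
    effRes M u v = effRes M v u := by
  rw [effRes, effRes, hM.apply u v]
  ring

namespace SimpleGraph

variable {V : Type*} [Fintype V] (G : SimpleGraph V) [DecidableRel G.Adj]

theorem rank_lapMatrix_add_card_connectedComponent [DecidableEq V] :
    (G.lapMatrix ℝ).rank + Fintype.card G.ConnectedComponent = Fintype.card V := by
  rw [card_connectedComponent_eq_finrank_ker_toLin'_lapMatrix, rank, ← toLin'_apply',
    LinearMap.finrank_range_add_finrank_ker, Module.finrank_fintype_fun_eq_card]

theorem Connected.rank_lapMatrix_add_one [DecidableEq V] {G : SimpleGraph V} [DecidableRel G.Adj]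
    (hG : G.Connected) : (G.lapMatrix ℝ).rank + 1 = Fintype.card V := by
  have hcard : Fintype.card G.ConnectedComponent = 1 :=
    le_antisymm
      (Fintype.card_le_one_iff_subsingleton.mpr hG.preconnected.subsingleton_connectedComponent)
      (Fintype.card_pos_iff.mpr (hG.nonempty.map G.connectedComponentMk))
  rw [← hcard, G.rank_lapMatrix_add_card_connectedComponent]

theorem trace_lapMatrix_mul {R : Type*} [CommRing R] [DecidableEq V] (M : Matrix V V R) :
    (G.lapMatrix R * M).trace = ∑ u, ∑ v, if G.Adj u v then M u u - M v u else 0 := by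
  refine Finset.sum_congr rfl fun u _ => ?_
  rw [diag_apply, lapMatrix, degMatrix, Matrix.sub_mul, Matrix.sub_apply, diagonal_mul, mul_apply,
    G.degree_eq_sum_if_adj, Finset.sum_mul, ← Finset.sum_sub_distrib]
  refine Finset.sum_congr rfl fun v _ => ?_
  by_cases h : G.Adj u v <;> simp [h]

theorem sum_adj_eq_two_nsmul_sum_lt_adj [LinearOrder V] {β : Type*} [AddCommMonoid β]
    (f : V → V → β) (hf : ∀ u v, f u v = f v u) :
    ∑ u, ∑ v, (if G.Adj u v then f u v else 0) =
      2 • ∑ u, ∑ v, (if u < v ∧ G.Adj u v then f u v else 0) := by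
  have hswap : ∑ u, ∑ v, (if u < v ∧ G.Adj u v then f u v else 0) =
      ∑ u, ∑ v, (if v < u ∧ G.Adj u v then f u v else 0) := by
    rw [Finset.sum_comm]
    simp only [G.adj_comm, hf]
  rw [two_nsmul]
  nth_rewrite 2 [hswap]
  simp only [← Finset.sum_add_distrib]
  refine Finset.sum_congr rfl fun u _ => Finset.sum_congr rfl fun v _ => ?_
  by_cases h : G.Adj u v
  · rcases h.ne.lt_or_gt with huv | hvu
    · simp [h, huv, huv.not_gt]
    · simp [h, hvu, hvu.not_gt]
  · simp [h]

theorem sum_adj_effRes [DecidableEq V] {M : Matrix V V ℝ} (hM : M.IsSymm) :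
    ∑ u, ∑ v, (if G.Adj u v then effRes M u v else 0) = 2 * (G.lapMatrix ℝ * M).trace := by
  have hswap : ∑ u, ∑ v, (if G.Adj u v then M v v - M u v else 0) =
      ∑ u, ∑ v, (if G.Adj u v then M u u - M v u else 0) := by
    rw [Finset.sum_comm]
    simp only [G.adj_comm]
  have hsplit : ∀ u v, effRes M u v = (M u u - M v u) + (M v v - M u v) := fun u v => by
    rw [effRes, hM.apply u v]
    ring
  rw [trace_lapMatrix_mul, two_mul]
  nth_rewrite 2 [← hswap]
  simp only [← Finset.sum_add_distrib, hsplit, ite_add_ite, add_zero]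

end SimpleGraph

/-- For a connected graph `G` on `n` vertices, the sum of the
effective resistances over all edges equals `n - 1`. -/
theorem sum_resistance_over_edges {n : ℕ} (G : SimpleGraph (Fin n))
    [DecidableRel G.Adj] (hG : G.Connected)
    (Lp : Matrix (Fin n) (Fin n) ℝ)
    (hp1 : G.lapMatrix ℝ * Lp * G.lapMatrix ℝ = G.lapMatrix ℝ)
    (hp2 : Lp * G.lapMatrix ℝ * Lp = Lp)
    (hp3 : (G.lapMatrix ℝ * Lp)ᵀ = G.lapMatrix ℝ * Lp)
    (hp4 : (Lp * G.lapMatrix ℝ)ᵀ = Lp * G.lapMatrix ℝ) :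
    ∑ u : Fin n, ∑ v : Fin n,
        (if u < v ∧ G.Adj u v then effRes Lp u v else 0) = (n : ℝ) - 1 := by
  have hLp : (G.lapMatrix ℝ).IsPseudoinverse Lp := ⟨hp1, hp2, hp3, hp4⟩
  have hsymm : Lp.IsSymm := hLp.isSymm (G.isSymm_lapMatrix ℝ)
  have hrank := hG.rank_lapMatrix_add_one
  rw [Fintype.card_fin] at hrank
  have htrace : (G.lapMatrix ℝ * Lp).trace = (n : ℝ) - 1 := by
    rw [trace_eq_rank_of_isIdempotentElem hLp.isIdempotentElem_mul,
      rank_mul_eq_left_of_mul_mul_eq hp1, eq_sub_iff_add_eq]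
    exact_mod_cast hrank
  have hedges := G.sum_adj_eq_two_nsmul_sum_lt_adj (effRes Lp) (effRes_comm hsymm)
  rw [G.sum_adj_effRes hsymm, htrace, two_nsmul] at hedges
  linarith
end

section
/- Let L = [[A, B],[Bᵀ, D]] be a real symmetric block matrix with D nonsingular, and set H = A − B D⁻¹ Bᵀ. Then X = [[H^#, −H^# B D⁻¹],[−D⁻¹ Bᵀ H^#, D⁻¹ + D⁻¹ Bᵀ H^# B D⁻¹]] is a symmetric {1}-inverse of L, i.e., L X L = L and X = Xᵀ. -/
open Matrix

/-- Uniqueness of the group inverse. -/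
theorem group_inv_unique {n : Type*} [Fintype n] [DecidableEq n]
    (H X Y : Matrix n n ℝ)
    (h1 : H * X * H = H) (h2 : X * H * X = X) (h3 : H * X = X * H)
    (k1 : H * Y * H = H) (k2 : Y * H * Y = Y) (k3 : H * Y = Y * H) :
    X = Y := by
  have hXY : X * H = Y * H := by
    have h5 : X * H = (Y * H) * (X * H) := by
      calc X * H = H * X := h3.symm
        _ = (H * Y * H) * X := by rw [k1]
        _ = (Y * H) * (X * H) := by rw [k3, mul_assoc, h3]
    have h6 : (Y * H) * (X * H) = Y * H := by
      calc (Y * H) * (X * H) = Y * (H * X * H) := by noncomm_ring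
        _ = Y * H := by rw [h1]
    rw [h5, h6]
  calc X = X * H * X := h2.symm
    _ = X * (H * Y) := by rw [mul_assoc, h3, hXY, ← k3]
    _ = (X * H) * Y := by rw [mul_assoc]
    _ = (Y * H) * Y := by rw [hXY]
    _ = Y := k2

/-- Let `L = [[A, B],[Bᵀ, D]]` be a real symmetric block matrix
with `D` nonsingular, `H = A - B D⁻¹ Bᵀ`, and let `Hs` be the group inverse of
`H`. Then `X = [[Hs, -Hs B D⁻¹],[-D⁻¹ Bᵀ Hs, D⁻¹ + D⁻¹ Bᵀ Hs B D⁻¹]]` is a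
symmetric {1}-inverse of `L`. -/
theorem block_one_inverse {p q : Type*} [Fintype p] [Fintype q]
    [DecidableEq p] [DecidableEq q]
    (A : Matrix p p ℝ) (B : Matrix p q ℝ) (D : Matrix q q ℝ)
    (hA : A.IsSymm) (hD : D.IsSymm) (hDunit : IsUnit D.det)
    (Hs : Matrix p p ℝ)
    (hH1 : (A - B * D⁻¹ * Bᵀ) * Hs * (A - B * D⁻¹ * Bᵀ) = A - B * D⁻¹ * Bᵀ)
    (hH2 : Hs * (A - B * D⁻¹ * Bᵀ) * Hs = Hs)
    (hH3 : (A - B * D⁻¹ * Bᵀ) * Hs = Hs * (A - B * D⁻¹ * Bᵀ)) :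
    Matrix.fromBlocks A B Bᵀ D *
        Matrix.fromBlocks Hs (-(Hs * B * D⁻¹)) (-(D⁻¹ * Bᵀ * Hs))
          (D⁻¹ + D⁻¹ * Bᵀ * Hs * B * D⁻¹) *
        Matrix.fromBlocks A B Bᵀ D = Matrix.fromBlocks A B Bᵀ D ∧
      (Matrix.fromBlocks Hs (-(Hs * B * D⁻¹)) (-(D⁻¹ * Bᵀ * Hs))
          (D⁻¹ + D⁻¹ * Bᵀ * Hs * B * D⁻¹)).IsSymm := by
  have hDE : D * D⁻¹ = 1 := Matrix.mul_nonsing_inv D hDunit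
  have hED : D⁻¹ * D = 1 := Matrix.nonsing_inv_mul D hDunit
  have hET : (D⁻¹)ᵀ = D⁻¹ := by
    rw [Matrix.transpose_nonsing_inv, hD.eq]
  have hHT : (A - B * D⁻¹ * Bᵀ)ᵀ = A - B * D⁻¹ * Bᵀ := by
    simp [Matrix.transpose_sub, Matrix.transpose_mul, hET, hA.eq, Matrix.mul_assoc]
  -- symmetry of Hs via uniqueness of the group inverse
  have hHsT : Hsᵀ = Hs := by
    refine group_inv_unique (A - B * D⁻¹ * Bᵀ) Hsᵀ Hs ?_ ?_ ?_ hH1 hH2 hH3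
    · have := congrArg Matrix.transpose hH1
      simpa [Matrix.transpose_mul, hA.eq, hET, Matrix.transpose_transpose, Matrix.mul_assoc] using this
    · have := congrArg Matrix.transpose hH2
      simpa [Matrix.transpose_mul, hA.eq, hET, Matrix.transpose_transpose, Matrix.mul_assoc] using this
    · have := congrArg Matrix.transpose hH3
      simpa [Matrix.transpose_mul, hHT] using this.symm
  constructor
  · rw [Matrix.fromBlocks_multiply, Matrix.fromBlocks_multiply]
    refine Matrix.fromBlocks_inj.mpr ⟨?_, ?_, ?_, ?_⟩
    · calc (A * Hs + B * -(D⁻¹ * Bᵀ * Hs)) * A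
            + (A * -(Hs * B * D⁻¹) + B * (D⁻¹ + D⁻¹ * Bᵀ * Hs * B * D⁻¹)) * Bᵀ
          = (A - B * D⁻¹ * Bᵀ) * Hs * (A - B * D⁻¹ * Bᵀ) + B * D⁻¹ * Bᵀ := by
            simp only [Matrix.mul_neg, Matrix.neg_mul, Matrix.mul_add, Matrix.add_mul, Matrix.mul_sub, Matrix.sub_mul, Matrix.mul_one, Matrix.one_mul, Matrix.mul_assoc]; abel
        _ = (A - B * D⁻¹ * Bᵀ) + B * D⁻¹ * Bᵀ := by rw [hH1]
        _ = A := by simp only [Matrix.mul_neg, Matrix.neg_mul, Matrix.mul_add, Matrix.add_mul, Matrix.mul_sub, Matrix.sub_mul, Matrix.mul_one, Matrix.one_mul, Matrix.mul_assoc]; abel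
    · calc (A * Hs + B * -(D⁻¹ * Bᵀ * Hs)) * B
            + (A * -(Hs * B * D⁻¹) + B * (D⁻¹ + D⁻¹ * Bᵀ * Hs * B * D⁻¹)) * D
          = (A - B * D⁻¹ * Bᵀ) * Hs * B - (A * Hs * B) * (D⁻¹ * D)
            + B * (D⁻¹ * D) + (B * D⁻¹ * Bᵀ * Hs * B) * (D⁻¹ * D) := by
            simp only [Matrix.mul_neg, Matrix.neg_mul, Matrix.mul_add, Matrix.add_mul, Matrix.mul_sub, Matrix.sub_mul, Matrix.mul_one, Matrix.one_mul, Matrix.mul_assoc]; abel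
        _ = B := by rw [hED]; simp only [Matrix.mul_neg, Matrix.neg_mul, Matrix.mul_add, Matrix.add_mul, Matrix.mul_sub, Matrix.sub_mul, Matrix.mul_one, Matrix.one_mul, Matrix.mul_assoc]; abel
    · calc (Bᵀ * Hs + D * -(D⁻¹ * Bᵀ * Hs)) * A
            + (Bᵀ * -(Hs * B * D⁻¹) + D * (D⁻¹ + D⁻¹ * Bᵀ * Hs * B * D⁻¹)) * Bᵀ
          = Bᵀ * Hs * A - (D * D⁻¹) * (Bᵀ * Hs * A) - Bᵀ * Hs * B * D⁻¹ * Bᵀ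
            + (D * D⁻¹) * Bᵀ + (D * D⁻¹) * (Bᵀ * Hs * B * D⁻¹ * Bᵀ) := by
            simp only [Matrix.mul_neg, Matrix.neg_mul, Matrix.mul_add, Matrix.add_mul, Matrix.mul_sub, Matrix.sub_mul, Matrix.mul_one, Matrix.one_mul, Matrix.mul_assoc]; abel
        _ = Bᵀ := by rw [hDE]; simp only [Matrix.mul_neg, Matrix.neg_mul, Matrix.mul_add, Matrix.add_mul, Matrix.mul_sub, Matrix.sub_mul, Matrix.mul_one, Matrix.one_mul, Matrix.mul_assoc]; abel
    · calc (Bᵀ * Hs + D * -(D⁻¹ * Bᵀ * Hs)) * B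
            + (Bᵀ * -(Hs * B * D⁻¹) + D * (D⁻¹ + D⁻¹ * Bᵀ * Hs * B * D⁻¹)) * D
          = Bᵀ * Hs * B - (D * D⁻¹) * (Bᵀ * Hs * B) - (Bᵀ * Hs * B) * (D⁻¹ * D)
            + D * (D⁻¹ * D) + (D * D⁻¹) * ((Bᵀ * Hs * B) * (D⁻¹ * D)) := by
            simp only [Matrix.mul_neg, Matrix.neg_mul, Matrix.mul_add, Matrix.add_mul, Matrix.mul_sub, Matrix.sub_mul, Matrix.mul_one, Matrix.one_mul, Matrix.mul_assoc]; abel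
        _ = D := by rw [hDE, hED]; simp only [Matrix.mul_neg, Matrix.neg_mul, Matrix.mul_add, Matrix.add_mul, Matrix.mul_sub, Matrix.sub_mul, Matrix.mul_one, Matrix.one_mul, Matrix.mul_assoc]; abel
  · refine Matrix.IsSymm.fromBlocks ?_ ?_ ?_
    · exact hHsT
    · simp [Matrix.transpose_mul, hET, hHsT, Matrix.mul_assoc]
    · simp [Matrix.IsSymm, Matrix.transpose_add, Matrix.transpose_mul, hET, hHsT,
        hD.eq, Matrix.mul_assoc]
end
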